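/- arXiv:2408.07316 — 2 statements merged into one kernel-verified Lean document; each statement's English description precedes it below -/
import Mathlib

section
/- Let B ⊆ X, p : E → B a continuous map, and r : X → B a retraction (r restricted to B is the identity). Then sec_r(p) = sec(p). -/
open Set

/-- Sectional number: minimal cardinality of open covers of the codomain,
each member admitting a strict local section. -/
noncomputable def secNum {X Y : Type*} [TopologicalSpace X] [TopologicalSpace Y]
    (f : C(X, Y)) : ℕ∞ :=
  sInf {n : ℕ∞ | ∃ k : ℕ, n = (k : ℕ∞) ∧
    ∃ U : Fin k → Set Y, (∀ i, IsOpen (U i)) ∧ (⋃ i, U i) = Set.univ ∧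
      ∀ i, ∃ s : C(U i, X), ∀ y : U i, f (s y) = (y : Y)}

/-- Sectional category: minimal cardinality of open covers of the codomain,
each member admitting a homotopy local section. -/
noncomputable def secatNum {X Y : Type*} [TopologicalSpace X] [TopologicalSpace Y]
    (f : C(X, Y)) : ℕ∞ :=
  sInf {n : ℕ∞ | ∃ k : ℕ, n = (k : ℕ∞) ∧
    ∃ U : Fin k → Set Y, (∀ i, IsOpen (U i)) ∧ (⋃ i, U i) = Set.univ ∧
      ∀ i, ∃ s : C(U i, X),
        (f.comp s).Homotopic ⟨Subtype.val, continuous_subtype_val⟩}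

/-- Lusternik–Schnirelmann category (normalized: cat(contractible) = 1). -/
noncomputable def catLS (X : Type*) [TopologicalSpace X] : ℕ∞ :=
  sInf {n : ℕ∞ | ∃ k : ℕ, n = (k : ℕ∞) ∧
    ∃ U : Fin k → Set X, (∀ i, IsOpen (U i)) ∧ (⋃ i, U i) = Set.univ ∧
      ∀ i, ∃ x₀ : X,
        ContinuousMap.Homotopic ⟨Subtype.val, continuous_subtype_val⟩
          (ContinuousMap.const (U i) x₀)}

/-- Relative sectional number of `p` with respect to `g`: minimal cardinality of
open covers of `X`, each member admitting a continuous lift of `g` through `p`. -/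
noncomputable def relSecNum {X E B : Type*} [TopologicalSpace X] [TopologicalSpace E]
    [TopologicalSpace B] (p : C(E, B)) (g : C(X, B)) : ℕ∞ :=
  sInf {n : ℕ∞ | ∃ k : ℕ, n = (k : ℕ∞) ∧
    ∃ U : Fin k → Set X, (∀ i, IsOpen (U i)) ∧ (⋃ i, U i) = Set.univ ∧
      ∀ i, ∃ σ : C(U i, E), ∀ x : U i, p (σ x) = g (x : X)}

section RelativeSectionalNumber

variable {X Y E B : Type*} [TopologicalSpace X] [TopologicalSpace Y] [TopologicalSpace E]
  [TopologicalSpace B]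

theorem relSecNum_id (p : C(E, B)) : relSecNum p (ContinuousMap.id B) = secNum p :=
  rfl

/-- Lifts of `g` over an open cover pull back along `f` to lifts of `g ∘ f`. -/
theorem relSecNum_comp_le (p : C(E, B)) (g : C(X, B)) (f : C(Y, X)) :
    relSecNum p (g.comp f) ≤ relSecNum p g := by
  refine sInf_le_sInf ?_
  rintro _ ⟨k, rfl, U, hUopen, hUcover, hU⟩
  refine ⟨k, rfl, fun i => f ⁻¹' U i, fun i => (hUopen i).preimage f.continuous, ?_, ?_⟩
  · rw [← preimage_iUnion, hUcover, preimage_univ]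
  · intro i
    obtain ⟨σ, hσ⟩ := hU i
    exact ⟨σ.comp (f.restrictPreimage (U i)), fun y => hσ _⟩

end RelativeSectionalNumber

theorem stmt_13 {X E : Type*} [TopologicalSpace X] [TopologicalSpace E]
    (B : Set X) (p : C(E, B)) (r : C(X, B)) (hr : ∀ b : B, r (b : X) = b) :
    relSecNum p r = secNum p := by
  have hretract : r.comp ⟨Subtype.val, continuous_subtype_val⟩ = ContinuousMap.id B :=
    ContinuousMap.ext hr
  apply le_antisymm
  · calc relSecNum p r = relSecNum p ((ContinuousMap.id B).comp r) := rfl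
      _ ≤ relSecNum p (ContinuousMap.id B) := relSecNum_comp_le p _ r
      _ = secNum p := relSecNum_id p
  · calc secNum p = relSecNum p (r.comp ⟨Subtype.val, continuous_subtype_val⟩) := by
          rw [hretract, relSecNum_id]
      _ ≤ relSecNum p r := relSecNum_comp_le p r _
end

section
/- Let m ≥ 1, X a topological space, and g : X → D^m a continuous map into the closed unit disc in ℝ^m. Then (X, D^m; g) fails the coincidence property if and only if there exists a continuous map φ : X → S^{m-1} such that φ(x) = g(x) for every x ∈ g⁻¹(S^{m-1}). -/
/-!
If `f` never meets `g`, push `g x` away from `f x` along the ray from `f x` through `g x` until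
it reaches the unit sphere; this is continuous in `x` and fixes the points where `g x` already lies
on the sphere. Conversely, if `φ : X → S^{m-1}` agrees with `g` on `g⁻¹(S^{m-1})`, then `-φ`
never meets `g`: a coincidence `-φ x = g x` would put `g x` on the sphere, forcing `φ x = -φ x`.
-/

open Set

open Metric RealInnerProductSpace

section InnerProductSpace

variable {E : Type*} [NormedAddCommGroup E] [InnerProductSpace ℝ E]

/-- The nonnegative root `t` of `‖p + t • v‖ = 1`, i.e. the time at which the ray from `p` in
direction `v` leaves the closed unit ball. -/
noncomputable def rayExitTime (p v : E) : ℝ :=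
  (√(⟪p, v⟫ ^ 2 + ‖v‖ ^ 2 * (1 - ‖p‖ ^ 2)) - ⟪p, v⟫) / ‖v‖ ^ 2

theorem norm_add_rayExitTime_smul {p v : E} (hp : ‖p‖ ≤ 1) (hv : v ≠ 0) :
    ‖p + rayExitTime p v • v‖ = 1 := by
  have hv2 : 0 < ‖v‖ ^ 2 := by positivity
  have hdisc : 0 ≤ ⟪p, v⟫ ^ 2 + ‖v‖ ^ 2 * (1 - ‖p‖ ^ 2) := by
    have : ‖p‖ ^ 2 ≤ 1 := pow_le_one₀ (norm_nonneg p) hp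
    nlinarith [sq_nonneg ⟪p, v⟫]
  have hsq := Real.sq_sqrt hdisc
  have hroot :
      ‖p‖ ^ 2 + 2 * (rayExitTime p v * ⟪p, v⟫) + rayExitTime p v ^ 2 * ‖v‖ ^ 2 = 1 := by
    unfold rayExitTime
    field_simp
    linear_combination hsq
  have : ‖p + rayExitTime p v • v‖ ^ 2 = 1 := by
    rw [norm_add_sq_real, real_inner_smul_right, norm_smul, mul_pow, Real.norm_eq_abs, sq_abs,
      hroot]
  exact (pow_eq_one_iff_of_nonneg (norm_nonneg _) two_ne_zero).mp this

theorem rayExitTime_eq_zero {p v : E} (hp : ‖p‖ = 1) (hpv : 0 ≤ ⟪p, v⟫) :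
    rayExitTime p v = 0 := by
  simp [rayExitTime, hp, Real.sqrt_sq hpv]

theorem Continuous.rayExitTime {X : Type*} [TopologicalSpace X] {p v : X → E}
    (hp : Continuous p) (hv : Continuous v) (hv0 : ∀ x, v x ≠ 0) :
    Continuous fun x ↦ rayExitTime (p x) (v x) := by
  unfold _root_.rayExitTime
  exact Continuous.div (by fun_prop) (by fun_prop) fun x ↦ by simpa using hv0 x

theorem exists_sphere_map_eqOn_of_forall_ne {X : Type*} [TopologicalSpace X]
    (f g : C(X, closedBall (0 : E) 1)) (hfg : ∀ x, f x ≠ g x) :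
    ∃ φ : C(X, sphere (0 : E) 1),
      ∀ x, (g x : E) ∈ sphere (0 : E) 1 → (φ x : E) = g x := by
  have hg : ∀ x, ‖(g x : E)‖ ≤ 1 := fun x ↦ mem_closedBall_zero_iff.mp (g x).2
  have hv0 : ∀ x, (g x : E) - f x ≠ 0 := fun x h ↦ hfg x (Subtype.ext (sub_eq_zero.mp h).symm)
  let ψ : X → E := fun x ↦ g x + rayExitTime (g x : E) (g x - f x) • ((g x : E) - f x)
  have hψ : ∀ x, ψ x ∈ sphere (0 : E) 1 := fun x ↦
    mem_sphere_zero_iff_norm.mpr (norm_add_rayExitTime_smul (hg x) (hv0 x))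
  have hψc : Continuous ψ := by
    have hgc : Continuous fun x ↦ (g x : E) := by fun_prop
    have hfc : Continuous fun x ↦ (f x : E) := by fun_prop
    exact hgc.add ((hgc.rayExitTime (hgc.sub hfc) hv0).smul (hgc.sub hfc))
  refine ⟨⟨fun x ↦ ⟨ψ x, hψ x⟩, hψc.subtype_mk hψ⟩, fun x hx ↦ ?_⟩
  have hgx : ‖(g x : E)‖ = 1 := mem_sphere_zero_iff_norm.mp hx
  -- On the sphere `⟪g, g - f⟫ = 1 - ⟪g, f⟫ ≥ 0` by Cauchy–Schwarz, so the ray exits at once.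
  have hinner : 0 ≤ ⟪(g x : E), g x - f x⟫ := by
    have hf : ‖(f x : E)‖ ≤ 1 := mem_closedBall_zero_iff.mp (f x).2
    have := real_inner_le_norm (g x : E) (f x)
    rw [inner_sub_right, real_inner_self_eq_norm_sq, hgx]
    nlinarith
  simp [ψ, rayExitTime_eq_zero hgx hinner]

end InnerProductSpace

theorem exists_forall_ne_of_sphere_map_eqOn {X E : Type*} [TopologicalSpace X]
    [NormedAddCommGroup E] [NormedSpace ℝ E] (g : C(X, closedBall (0 : E) 1))
    (φ : C(X, sphere (0 : E) 1))
    (hφ : ∀ x, (g x : E) ∈ sphere (0 : E) 1 → (φ x : E) = g x) :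
    ∃ f : C(X, closedBall (0 : E) 1), ∀ x, f x ≠ g x := by
  have hφ1 : ∀ x, ‖(φ x : E)‖ = 1 := fun x ↦ mem_sphere_zero_iff_norm.mp (φ x).2
  have hmem : ∀ x, -(φ x : E) ∈ closedBall (0 : E) 1 := fun x ↦ by simp [hφ1 x]
  refine ⟨⟨fun x ↦ ⟨-(φ x : E), hmem x⟩, by fun_prop⟩, fun x hx ↦ ?_⟩
  have hval : -(φ x : E) = g x := congrArg Subtype.val hx
  have hgx : (g x : E) ∈ sphere (0 : E) 1 := by simp [← hval, hφ1 x]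
  have hzero : (φ x : E) = 0 := by
    have : IsAddTorsionFree E := .of_isTorsionFree ℝ E
    exact self_eq_neg.mp ((hφ x hgx).trans hval.symm)
  simpa [hzero] using hφ1 x

theorem stmt_19_general {X : Type*} [TopologicalSpace X] (m : ℕ)
    (g : C(X, ↥(Metric.closedBall (0 : EuclideanSpace ℝ (Fin m)) 1))) :
    (¬ ∀ f : C(X, ↥(Metric.closedBall (0 : EuclideanSpace ℝ (Fin m)) 1)),
        ∃ x, f x = g x) ↔
      ∃ φ : C(X, ↥(Metric.sphere (0 : EuclideanSpace ℝ (Fin m)) 1)),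
        ∀ x, ((g x : EuclideanSpace ℝ (Fin m)) ∈
            Metric.sphere (0 : EuclideanSpace ℝ (Fin m)) 1) →
          (φ x : EuclideanSpace ℝ (Fin m)) = (g x : EuclideanSpace ℝ (Fin m)) := by
  push Not
  constructor
  · rintro ⟨f, hf⟩
    exact exists_sphere_map_eqOn_of_forall_ne f g hf
  · rintro ⟨φ, hφ⟩
    exact exists_forall_ne_of_sphere_map_eqOn g φ hφ

theorem stmt_19 {X : Type*} [TopologicalSpace X] (m : ℕ) (hm : 1 ≤ m)
    (g : C(X, ↥(Metric.closedBall (0 : EuclideanSpace ℝ (Fin m)) 1))) :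
    (¬ ∀ f : C(X, ↥(Metric.closedBall (0 : EuclideanSpace ℝ (Fin m)) 1)),
        ∃ x, f x = g x) ↔
      ∃ φ : C(X, ↥(Metric.sphere (0 : EuclideanSpace ℝ (Fin m)) 1)),
        ∀ x, ((g x : EuclideanSpace ℝ (Fin m)) ∈
            Metric.sphere (0 : EuclideanSpace ℝ (Fin m)) 1) →
          (φ x : EuclideanSpace ℝ (Fin m)) = (g x : EuclideanSpace ℝ (Fin m)) :=
  stmt_19_general m g
end
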